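/- The quadratic form q on Γ(2g,2)/Γ(2g,4) given by q([[I+2a,2b],[2c,I+2d]]) = Tr(a) + ⟨Diag(b),Diag(c)⟩ mod 2 is invariant under conjugation by Sp(2g,ℤ). -/

import Mathlib

open Matrix

/-- The standard symplectic form matrix `J = [[0, I], [-I, 0]]`. -/
def Jmat (g : ℕ) (R : Type*) [CommRing R] :
    Matrix (Fin g ⊕ Fin g) (Fin g ⊕ Fin g) R :=
  Matrix.fromBlocks 0 1 (-1) 0

/-- The set of integral symplectic matrices, `Sp(2g, ℤ)`. -/
def SpSet (g : ℕ) : Set (Matrix (Fin g ⊕ Fin g) (Fin g ⊕ Fin g) ℤ) :=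
  {X | Xᵀ * Jmat g ℤ * X = Jmat g ℤ}

/-- The subset `𝔎` of `Sp(2g, ℤ)`: symplectic matrices of the form
`[[I+2a, 2b], [2c, I+2d]]` with `Diag b` and `Diag c` even and `Tr a` even. -/
def KSet (g : ℕ) : Set (Matrix (Fin g ⊕ Fin g) (Fin g ⊕ Fin g) ℤ) :=
  {X | X ∈ SpSet g ∧ ∃ a b c d : Matrix (Fin g) (Fin g) ℤ,
    X = Matrix.fromBlocks (1 + 2 • a) (2 • b) (2 • c) (1 + 2 • d) ∧
    (∀ i, (2:ℤ) ∣ b i i) ∧ (∀ i, (2:ℤ) ∣ c i i) ∧ (2:ℤ) ∣ Matrix.trace a}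

/-- The principal congruence subgroup `Γ(2g, N)`: symplectic integral matrices
congruent to the identity modulo `N`. -/
def GammaSet (g : ℕ) (N : ℤ) : Set (Matrix (Fin g ⊕ Fin g) (Fin g ⊕ Fin g) ℤ) :=
  {X | X ∈ SpSet g ∧ ∀ i j, N ∣ (X i j - (1 : Matrix (Fin g ⊕ Fin g) (Fin g ⊕ Fin g) ℤ) i j)}

/-- For `X = [[I+2a, 2b], [2c, I+2d]] ∈ Γ(2g,2)`, the quantity
`Tr a + ⟨Diag b, Diag c⟩ mod 2`, computed from the entries of `X`. -/
def qform (g : ℕ) (X : Matrix (Fin g ⊕ Fin g) (Fin g ⊕ Fin g) ℤ) : ZMod 2 :=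
  (((∑ i : Fin g, (X (Sum.inl i) (Sum.inl i) - 1) / 2) +
    ∑ i : Fin g, (X (Sum.inl i) (Sum.inr i) / 2) * (X (Sum.inr i) (Sum.inl i) / 2) : ℤ) : ZMod 2)


/-!
Write `X = 1 + 2Y`. Reducing the symplectic condition `XᵀJX = J` modulo `2` shows that
`S = JY` is symmetric over `𝔽₂`, and `q(X) = tr(SU) + δᵀUδ` with `δ = diag S` and
`U = [[0, 1], [0, 0]]`. Conjugating `X` by `P` replaces `S` by `QᵀSQ` (`Q = P⁻¹`), and since
`diag (QᵀSQ) = Qᵀ diag S` over `𝔽₂`, this is the same as replacing `U` by `QUQᵀ`. For fixed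
symmetric `S`, adding a symmetric matrix `D` to `U` changes the value by
`∑ₖ (Sₖₖ + Sₖₖ²) Dₖₖ = 0`, and `QUQᵀ - U` is symmetric exactly because
`Q (Uᵀ - U) Qᵀ = QJQᵀ = J = Uᵀ - U`.
-/

open Finset

lemma ZMod.mul_self_eq_self_two (x : ZMod 2) : x * x = x := by fin_cases x <;> rfl

theorem CharTwo.sum_sum_eq_sum_diag {ι R : Type*} [Fintype ι] [Ring R] [CharP R 2]
    (f : ι → ι → R) (hf : ∀ k l, f k l = f l k) :
    ∑ k, ∑ l, f k l = ∑ k, f k k := by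
  classical
  have h_offDiag : ∑ p ∈ (univ : Finset ι).offDiag, f p.1 p.2 = 0 := by
    refine sum_involution (fun p _ ↦ p.swap) (fun p _ ↦ ?_) (fun p hp _ ↦ ?_)
      (fun p hp ↦ by simpa [and_comm, eq_comm] using hp) (fun _ _ ↦ rfl)
    · rw [Prod.fst_swap, Prod.snd_swap, hf, CharTwo.add_self_eq_zero]
    · simp only [mem_offDiag] at hp
      exact fun h ↦ hp.2.2 (congrArg Prod.snd h)
  rw [← sum_product', ← diag_union_offDiag, sum_union (disjoint_diag_offDiag _), sum_diag,
    h_offDiag, add_zero]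

namespace Matrix

theorem exists_eq_add_smul_of_dvd_sub {m n : Type*} {k : ℤ} {M N : Matrix m n ℤ}
    (h : ∀ i j, k ∣ M i j - N i j) : ∃ Y : Matrix m n ℤ, M = N + k • Y := by
  choose Y hY using h
  refine ⟨of Y, ?_⟩
  ext i j
  rw [add_apply, smul_apply, of_apply, smul_eq_mul, ← hY, add_sub_cancel]

section TraceDiagForm

variable {ι : Type*} [Fintype ι]

def traceDiagForm (A S : Matrix ι ι (ZMod 2)) : ZMod 2 :=
  trace (S * A) + diag S ⬝ᵥ (A *ᵥ diag S)

theorem diag_transpose_mul_mul_of_isSymm {S : Matrix ι ι (ZMod 2)} (hS : S.IsSymm)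
    (R : Matrix ι ι (ZMod 2)) : diag (Rᵀ * S * R) = Rᵀ *ᵥ diag S := by
  ext α
  have hsymm : ∀ k l, R k α * S k l * R l α = R l α * S l k * R k α := fun k l ↦ by
    rw [← hS.apply k l]; ring
  simp only [diag_apply, mul_apply, transpose_apply, sum_mul, mulVec, dotProduct]
  rw [sum_comm, CharTwo.sum_sum_eq_sum_diag _ hsymm]
  exact sum_congr rfl fun k _ ↦ by rw [mul_right_comm, ZMod.mul_self_eq_self_two]

theorem traceDiagForm_transpose_mul_mul {S : Matrix ι ι (ZMod 2)} (hS : S.IsSymm)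
    (A R : Matrix ι ι (ZMod 2)) :
    traceDiagForm A (Rᵀ * S * R) = traceDiagForm (R * A * Rᵀ) S := by
  have h_trace : trace (Rᵀ * S * R * A) = trace (S * (R * A * Rᵀ)) := by
    rw [Matrix.mul_assoc, Matrix.mul_assoc, trace_mul_comm]
    simp only [Matrix.mul_assoc]
  have h_diag : ∀ d : ι → ZMod 2, (Rᵀ *ᵥ d) ⬝ᵥ (A *ᵥ (Rᵀ *ᵥ d)) = d ⬝ᵥ ((R * A * Rᵀ) *ᵥ d) :=
    fun d ↦ by simp only [← mulVec_mulVec, dotProduct_mulVec, mulVec_transpose]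
  rw [traceDiagForm, traceDiagForm, diag_transpose_mul_mul_of_isSymm hS, h_trace, h_diag]

theorem traceDiagForm_add_of_isSymm {S D : Matrix ι ι (ZMod 2)} (hS : S.IsSymm)
    (hD : D.IsSymm) (A : Matrix ι ι (ZMod 2)) :
    traceDiagForm (A + D) S = traceDiagForm A S := by
  have h_trace : trace (S * D) = ∑ k, S k k * D k k := by
    simp only [trace, diag_apply, mul_apply]
    exact CharTwo.sum_sum_eq_sum_diag _ fun k l ↦ by rw [hS.apply k l, hD.apply l k]
  have h_diag : diag S ⬝ᵥ (D *ᵥ diag S) = ∑ k, S k k * D k k := by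
    simp only [dotProduct, mulVec, diag_apply, mul_sum]
    rw [CharTwo.sum_sum_eq_sum_diag _ fun k l ↦ by rw [hD.apply l k]; ring]
    exact sum_congr rfl fun k _ ↦ by rw [mul_left_comm, ZMod.mul_self_eq_self_two, mul_comm]
  rw [traceDiagForm, traceDiagForm, Matrix.mul_add, trace_add, add_mulVec, dotProduct_add,
    h_trace, h_diag, add_add_add_comm, CharTwo.add_self_eq_zero, add_zero]

end TraceDiagForm

section Symplectic

variable {l : Type*} [DecidableEq l]

variable (l) in
def upperId (R : Type*) [Zero R] [One R] : Matrix (l ⊕ l) (l ⊕ l) R := fromBlocks 0 1 0 0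

theorem upperId_transpose_sub (R : Type*) [CommRing R] :
    (upperId l R)ᵀ - upperId l R = J l R := by
  rw [upperId, J, fromBlocks_transpose, sub_eq_add_neg, fromBlocks_neg, fromBlocks_add]
  simp

variable [Fintype l]

theorem traceDiagForm_upperId_J_mul (Y : Matrix (l ⊕ l) (l ⊕ l) (ZMod 2)) :
    traceDiagForm (upperId l (ZMod 2)) (J l (ZMod 2) * Y) =
      ∑ i, Y (.inl i) (.inl i) + ∑ i, Y (.inl i) (.inr i) * Y (.inr i) (.inl i) := by
  simp [traceDiagForm, upperId, J, trace, mul_apply, mulVec, dotProduct, Fintype.sum_sum_type,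
    one_apply, CharTwo.neg_eq, mul_comm]

theorem traceDiagForm_upperId_conj {S R : Matrix (l ⊕ l) (l ⊕ l) (ZMod 2)} (hS : S.IsSymm)
    (hR : R ∈ symplecticGroup l (ZMod 2)) :
    traceDiagForm (upperId l (ZMod 2)) (Rᵀ * S * R) = traceDiagForm (upperId l (ZMod 2)) S := by
  set U := upperId l (ZMod 2)
  have hD : (R * U * Rᵀ - U).IsSymm := by
    rw [IsSymm, ← sub_eq_zero]
    calc (R * U * Rᵀ - U)ᵀ - (R * U * Rᵀ - U) = R * (Uᵀ - U) * Rᵀ - (Uᵀ - U) := by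
          simp only [transpose_sub, transpose_mul, transpose_transpose, Matrix.mul_sub,
            Matrix.sub_mul, Matrix.mul_assoc]
          abel
      _ = 0 := by rw [upperId_transpose_sub, SymplecticGroup.mem_iff.1 hR, sub_self]
  rw [traceDiagForm_transpose_mul_mul hS, ← add_sub_cancel U (R * U * Rᵀ),
    traceDiagForm_add_of_isSymm hS hD]

end Symplectic

end Matrix

namespace SymplecticGroup

variable {l : Type*} [DecidableEq l] [Fintype l] {R : Type*} [CommRing R]

theorem mem_of_mul_eq_one {P Q : Matrix (l ⊕ l) (l ⊕ l) R}
    (hP : P ∈ symplecticGroup l R) (hQP : Q * P = 1) : Q ∈ symplecticGroup l R := by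
  rw [mem_iff] at hP ⊢
  calc Q * J l R * Qᵀ = Q * (P * J l R * Pᵀ) * Qᵀ := by rw [hP]
    _ = (Q * P) * J l R * (Q * P)ᵀ := by rw [transpose_mul]; simp only [Matrix.mul_assoc]
    _ = J l R := by rw [hQP, transpose_one, Matrix.one_mul, Matrix.mul_one]

theorem J_mul_conj {P Q : Matrix (l ⊕ l) (l ⊕ l) R} (hQ : Q ∈ symplecticGroup l R)
    (hQP : Q * P = 1) (Y : Matrix (l ⊕ l) (l ⊕ l) R) :
    J l R * (P * Y * Q) = Qᵀ * (J l R * Y) * Q := by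
  have hJP : J l R * P = Qᵀ * J l R :=
    calc J l R * P = Qᵀ * J l R * Q * P := by rw [mem_iff'.1 hQ]
      _ = Qᵀ * J l R := by rw [Matrix.mul_assoc, hQP, Matrix.mul_one]
  simp only [← Matrix.mul_assoc, hJP]

theorem isSymm_map_J_mul_of_one_add_two_smul_mem {Y : Matrix (l ⊕ l) (l ⊕ l) ℤ}
    (hY : 1 + (2 : ℤ) • Y ∈ symplecticGroup l ℤ) :
    ((J l ℤ * Y).map (Int.castRingHom (ZMod 2))).IsSymm := by
  have hexp : (1 + (2 : ℤ) • Y)ᵀ * J l ℤ * (1 + (2 : ℤ) • Y)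
      = J l ℤ + (2 : ℤ) • (Yᵀ * J l ℤ + J l ℤ * Y + (2 : ℤ) • (Yᵀ * J l ℤ * Y)) := by
    simp only [transpose_add, transpose_one, transpose_smul, Matrix.add_mul, Matrix.mul_add,
      Matrix.one_mul, Matrix.mul_one, Matrix.smul_mul, Matrix.mul_smul, smul_add, smul_smul]
    abel
  have hrel : Yᵀ * J l ℤ + J l ℤ * Y + (2 : ℤ) • (Yᵀ * J l ℤ * Y) = 0 := by
    rw [mem_iff', hexp, add_eq_left] at hY
    exact (smul_eq_zero.1 hY).resolve_left two_ne_zero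
  have hT : (J l ℤ * Y)ᵀ = J l ℤ * Y + (2 : ℤ) • (Yᵀ * J l ℤ * Y) := by
    rw [transpose_mul, J_transpose, Matrix.mul_neg, neg_eq_iff_add_eq_zero, ← add_assoc, hrel]
  have h_two : ((2 : ℤ) • (Yᵀ * J l ℤ * Y)).map (Int.castRingHom (ZMod 2)) = 0 := by
    ext i j
    simp only [map_apply, Matrix.smul_apply, smul_eq_mul, map_mul, Matrix.zero_apply]
    exact mul_eq_zero_of_left (by decide) _
  rw [IsSymm, ← transpose_map, hT, Matrix.map_add _ (map_add _), h_two, add_zero]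

end SymplecticGroup

theorem Jmat_eq_neg_J (g : ℕ) : Jmat g ℤ = -J (Fin g) ℤ := by
  simp [Jmat, J, fromBlocks_neg]

theorem mem_SpSet_iff {g : ℕ} {X : Matrix (Fin g ⊕ Fin g) (Fin g ⊕ Fin g) ℤ} :
    X ∈ SpSet g ↔ X ∈ symplecticGroup (Fin g) ℤ := by
  rw [SymplecticGroup.mem_iff', SpSet, Set.mem_ofPred_eq, Jmat_eq_neg_J, Matrix.mul_neg,
    Matrix.neg_mul, neg_inj]

theorem qform_one_add_two_smul (g : ℕ) (W : Matrix (Fin g ⊕ Fin g) (Fin g ⊕ Fin g) ℤ) :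
    qform g (1 + (2 : ℤ) • W) = traceDiagForm (upperId (Fin g) (ZMod 2))
      ((J (Fin g) ℤ * W).map (Int.castRingHom (ZMod 2))) := by
  rw [Matrix.map_mul, map_J, traceDiagForm_upperId_J_mul]
  simp only [qform, Matrix.add_apply, Matrix.smul_apply, smul_eq_mul, one_apply, reduceCtorEq,
    if_true, if_false, zero_add, add_sub_cancel_left, Int.mul_ediv_cancel_left _ two_ne_zero]
  push_cast
  rfl

theorem stmt8_general (g : ℕ)
    (P Q : Matrix (Fin g ⊕ Fin g) (Fin g ⊕ Fin g) ℤ)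
    (hP : P ∈ SpSet g) (hPQ : P * Q = 1) (hQP : Q * P = 1) :
    ∀ X ∈ GammaSet g 2, qform g (P * X * Q) = qform g X := by
  rintro X ⟨hX, hX_two⟩
  obtain ⟨Y, rfl⟩ := exists_eq_add_smul_of_dvd_sub hX_two
  have hQ := SymplecticGroup.mem_of_mul_eq_one (mem_SpSet_iff.1 hP) hQP
  have hS := SymplecticGroup.isSymm_map_J_mul_of_one_add_two_smul_mem (mem_SpSet_iff.1 hX)
  have hconj : P * (1 + (2 : ℤ) • Y) * Q = 1 + (2 : ℤ) • (P * Y * Q) := by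
    rw [Matrix.mul_add, Matrix.add_mul, Matrix.mul_one, hPQ, Matrix.mul_smul, Matrix.smul_mul]
  rw [hconj, qform_one_add_two_smul, qform_one_add_two_smul,
    SymplecticGroup.J_mul_conj hQ hQP, Matrix.map_mul, Matrix.map_mul, transpose_map]
  exact traceDiagForm_upperId_conj hS (SymplecticGroup.map_mem hQ _)

/-- The quadratic form `q` on `Γ(2g,2)/Γ(2g,4)` is invariant under conjugation
by `Sp(2g, ℤ)`. -/
theorem stmt8 (g : ℕ) (hg : 1 ≤ g)
    (P Q : Matrix (Fin g ⊕ Fin g) (Fin g ⊕ Fin g) ℤ)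
    (hP : P ∈ SpSet g) (hPQ : P * Q = 1) (hQP : Q * P = 1) :
    ∀ X ∈ GammaSet g 2, qform g (P * X * Q) = qform g X :=
  stmt8_general g P Q hP hPQ hQP
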